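/- Let p ∈ ℕ, A, Â ∈ ℝ^{p×p}, and Δ, Δ̂ ∈ ℝ^{p×p} with Δ symmetric. Suppose for some η > 0 and ε_A ≥ 0 that |Δ̂ − Δ|_∞ ≤ 4‖Δ‖_1 η and ‖Â − A‖_1 ≤ ε_A ≤ ‖A‖_1. Define the long-run partial covariance matrices Ω := 2π A^⊤ΔA and Ω̂ := 2π Â^⊤Δ̂Â. Then |Ω̂ − Ω|_∞ ≤ 4π ‖A‖_1 (3‖Δ‖ ε_A + 16 ‖A‖_1 ‖Δ‖_1 η). -/

import Mathlib

open Matrix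

/-- Maximum absolute column-sum norm `‖M‖₁ = max_j ∑_i |M i j|`. -/
noncomputable def colOneNorm {p : ℕ} (M : Matrix (Fin p) (Fin p) ℝ) : ℝ :=
  ⨆ j : Fin p, ∑ i, |M i j|

/-- Spectral norm (largest singular value) of a square real matrix. -/
noncomputable def specNormR {p : ℕ} (M : Matrix (Fin p) (Fin p) ℝ) : ℝ :=
  ‖Matrix.toEuclideanCLM (𝕜 := ℝ) M‖

/-!
With `E = Â - A` and `D = Δ̂ - Δ`, the difference telescopes as
`ÂᵀΔ̂Â - AᵀΔA = AᵀΔE + EᵀΔÂ + ÂᵀDÂ`. Each entry of `XᵀMY` is the bilinear form of `M`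
on a column of `X` and a column of `Y`. The first two terms are bounded by the spectral
norm of `Δ` (Cauchy–Schwarz, with ℓ² norms dominated by ℓ¹ column sums), the last one by
the entrywise bound on `D`; the columns of `Â` have ℓ¹ norm at most `‖A‖₁ + ε_A ≤ 2‖A‖₁`.
-/

lemma EuclideanSpace.norm_le_sum_norm {𝕜 n : Type*} [RCLike 𝕜] [Fintype n]
    (x : EuclideanSpace 𝕜 n) : ‖x‖ ≤ ∑ i, ‖x i‖ := by
  rw [EuclideanSpace.norm_eq, Real.sqrt_le_left (by positivity)]
  exact Finset.sum_sq_le_sq_sum_of_nonneg fun i _ => norm_nonneg _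

namespace Matrix

section Entrywise

variable {n : Type*} [Fintype n]

lemma transpose_mul_mul_apply {R : Type*} [NonUnitalSemiring R] (X M Y : Matrix n n R)
    (i j : n) :
    (Xᵀ * M * Y) i j = Xᵀ i ⬝ᵥ M *ᵥ Yᵀ j := by
  rw [Matrix.mul_assoc, mul_apply, dotProduct]
  simp only [transpose_apply, mul_apply, mulVec, dotProduct, Finset.mul_sum]

lemma transpose_mul_mul_sub_transpose_mul_mul {R : Type*} [Ring R] (A A' D D' : Matrix n n R) :
    A'ᵀ * D' * A' - Aᵀ * D * A =
      Aᵀ * D * (A' - A) + (A' - A)ᵀ * D * A' + A'ᵀ * (D' - D) * A' := by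
  simp only [transpose_sub, Matrix.mul_sub, Matrix.sub_mul]
  abel

lemma abs_dotProduct_mulVec_le_of_abs_le {M : Matrix n n ℝ} {c : ℝ} (hM : ∀ k l, |M k l| ≤ c)
    (x y : n → ℝ) : |x ⬝ᵥ M *ᵥ y| ≤ c * (∑ k, |x k|) * ∑ l, |y l| := by
  calc |x ⬝ᵥ M *ᵥ y| = |∑ k, ∑ l, x k * M k l * y l| := by
        simp only [dotProduct, mulVec, Finset.mul_sum, mul_assoc]
    _ ≤ ∑ k, ∑ l, |x k| * c * |y l| := by
        refine (Finset.abs_sum_le_sum_abs _ _).trans (Finset.sum_le_sum fun k _ => ?_)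
        refine (Finset.abs_sum_le_sum_abs _ _).trans (Finset.sum_le_sum fun l _ => ?_)
        rw [abs_mul, abs_mul]
        gcongr
        exact hM k l
    _ = c * (∑ k, |x k|) * ∑ l, |y l| := by
        rw [mul_comm c, Finset.sum_mul, Finset.sum_mul_sum]

lemma abs_transpose_mul_mul_apply_le_of_abs_le {X M Y : Matrix n n ℝ} {i j : n} {a b c : ℝ}
    (hM : ∀ k l, |M k l| ≤ c) (hX : ∑ k, |X k i| ≤ a) (hY : ∑ l, |Y l j| ≤ b) :
    |(Xᵀ * M * Y) i j| ≤ c * a * b := by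
  rw [transpose_mul_mul_apply]
  refine (abs_dotProduct_mulVec_le_of_abs_le hM _ _).trans ?_
  have ha : 0 ≤ a := (Finset.sum_nonneg fun _ _ => abs_nonneg _).trans hX
  have hc : 0 ≤ c := (abs_nonneg _).trans (hM i i)
  exact mul_le_mul (mul_le_mul_of_nonneg_left hX hc) hY
    (Finset.sum_nonneg fun _ _ => abs_nonneg _) (mul_nonneg hc ha)

end Entrywise

section Spectral

variable {n : Type*} [Fintype n] [DecidableEq n]

lemma abs_dotProduct_mulVec_le_toEuclideanCLM (M : Matrix n n ℝ) (x y : n → ℝ) :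
    |x ⬝ᵥ M *ᵥ y| ≤ ‖toEuclideanCLM (𝕜 := ℝ) M‖ * (∑ k, |x k|) * ∑ l, |y l| := by
  have hx := EuclideanSpace.norm_le_sum_norm (WithLp.toLp 2 x)
  have hy := EuclideanSpace.norm_le_sum_norm (WithLp.toLp 2 y)
  simp only [Real.norm_eq_abs] at hx hy
  rw [← inner_toEuclideanCLM M (WithLp.toLp 2 x) (WithLp.toLp 2 y)]
  calc _ ≤ ‖WithLp.toLp 2 x‖ * ‖toEuclideanCLM (𝕜 := ℝ) M (WithLp.toLp 2 y)‖ :=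
        abs_real_inner_le_norm _ _
    _ ≤ (∑ k, |x k|) * (‖toEuclideanCLM (𝕜 := ℝ) M‖ * ∑ l, |y l|) := by
        gcongr
        exact (ContinuousLinearMap.le_opNorm _ _).trans (by gcongr)
    _ = _ := by ring

lemma abs_transpose_mul_mul_apply_le_toEuclideanCLM {X M Y : Matrix n n ℝ} {i j : n} {a b : ℝ}
    (hX : ∑ k, |X k i| ≤ a) (hY : ∑ l, |Y l j| ≤ b) :
    |(Xᵀ * M * Y) i j| ≤ ‖toEuclideanCLM (𝕜 := ℝ) M‖ * a * b := by
  rw [transpose_mul_mul_apply]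
  refine (abs_dotProduct_mulVec_le_toEuclideanCLM M _ _).trans ?_
  have ha : 0 ≤ a := (Finset.sum_nonneg fun _ _ => abs_nonneg _).trans hX
  have hM : 0 ≤ ‖toEuclideanCLM (𝕜 := ℝ) M‖ := norm_nonneg _
  exact mul_le_mul (mul_le_mul_of_nonneg_left hX hM) hY
    (Finset.sum_nonneg fun _ _ => abs_nonneg _) (mul_nonneg hM ha)

end Spectral

end Matrix

lemma sum_abs_le_colOneNorm {p : ℕ} (M : Matrix (Fin p) (Fin p) ℝ) (j : Fin p) :
    ∑ i, |M i j| ≤ colOneNorm M :=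
  le_ciSup (f := fun j => ∑ i, |M i j|) (Set.finite_range _).bddAbove j

lemma colOneNorm_nonneg {p : ℕ} (M : Matrix (Fin p) (Fin p) ℝ) : 0 ≤ colOneNorm M :=
  Real.iSup_nonneg fun _ => Finset.sum_nonneg fun _ _ => abs_nonneg _

lemma sum_abs_le_colOneNorm_add {p : ℕ} {A B : Matrix (Fin p) (Fin p) ℝ} {ε : ℝ}
    (h : colOneNorm (B - A) ≤ ε) (j : Fin p) : ∑ i, |B i j| ≤ colOneNorm A + ε :=
  calc ∑ i, |B i j| ≤ ∑ i, (|A i j| + |(B - A) i j|) :=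
        Finset.sum_le_sum fun i _ => sub_le_iff_le_add'.mp (abs_sub_abs_le_abs_sub _ _)
    _ ≤ colOneNorm A + ε := by
        rw [Finset.sum_add_distrib]
        exact add_le_add (sum_abs_le_colOneNorm A j) ((sum_abs_le_colOneNorm _ j).trans h)

theorem stmt14_general (p : ℕ) (η εA : ℝ)
    (A Ahat Δ Δhat : Matrix (Fin p) (Fin p) ℝ)
    (hΔd : ∀ i j, |Δhat i j - Δ i j| ≤ 4 * colOneNorm Δ * η)
    (hA1 : colOneNorm (Ahat - A) ≤ εA) (hA2 : εA ≤ colOneNorm A) :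
    ∀ i j,
      |((2 * Real.pi) • (Ahatᵀ * Δhat * Ahat)) i j -
          ((2 * Real.pi) • (Aᵀ * Δ * A)) i j| ≤
        4 * Real.pi * colOneNorm A *
          (3 * specNormR Δ * εA + 16 * colOneNorm A * colOneNorm Δ * η) := by
  intro i j
  set NA := colOneNorm A
  set δ := 4 * colOneNorm Δ * η
  have hA m : ∑ k, |A k m| ≤ NA := sum_abs_le_colOneNorm A m
  have hE m : ∑ k, |(Ahat - A) k m| ≤ εA := (sum_abs_le_colOneNorm _ m).trans hA1
  have hAhat m : ∑ k, |Ahat k m| ≤ 2 * NA := (sum_abs_le_colOneNorm_add hA1 m).trans (by linarith)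
  have h₁ := Matrix.abs_transpose_mul_mul_apply_le_toEuclideanCLM (M := Δ) (hA i) (hE j)
  have h₂ := Matrix.abs_transpose_mul_mul_apply_le_toEuclideanCLM (M := Δ) (hE i) (hAhat j)
  have h₃ := Matrix.abs_transpose_mul_mul_apply_le_of_abs_le (M := Δhat - Δ) hΔd (hAhat i) (hAhat j)
  have hδ : 0 ≤ δ := (abs_nonneg _).trans (hΔd i i)
  have hε : 0 ≤ εA := (colOneNorm_nonneg _).trans hA1
  have hS : 0 ≤ specNormR Δ := norm_nonneg _
  have hNA : 0 ≤ NA := colOneNorm_nonneg A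
  rw [Matrix.smul_apply, Matrix.smul_apply, smul_eq_mul, smul_eq_mul, ← mul_sub,
    ← Matrix.sub_apply, Matrix.transpose_mul_mul_sub_transpose_mul_mul, Matrix.add_apply,
    Matrix.add_apply, abs_mul, abs_of_pos Real.two_pi_pos]
  calc 2 * Real.pi * |_ + _ + _|
      ≤ 2 * Real.pi * (specNormR Δ * NA * εA + specNormR Δ * εA * (2 * NA) +
          δ * (2 * NA) * (2 * NA)) := by
        gcongr
        exact (abs_add_three _ _ _).trans (add_le_add_three h₁ h₂ h₃)
    _ = 2 * Real.pi * (NA * (3 * specNormR Δ * εA + 4 * NA * δ)) := by ring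
    _ ≤ 4 * Real.pi * NA * (3 * specNormR Δ * εA + 16 * NA * colOneNorm Δ * η) := by
        have : 0 ≤ NA * (3 * specNormR Δ * εA + 4 * NA * δ) := by positivity
        nlinarith [mul_nonneg Real.pi_pos.le this]

theorem stmt14 (p : ℕ) (η εA : ℝ) (hη : 0 < η) (hεA : 0 ≤ εA)
    (A Ahat Δ Δhat : Matrix (Fin p) (Fin p) ℝ) (hΔ : Δ.IsHermitian)
    (hΔd : ∀ i j, |Δhat i j - Δ i j| ≤ 4 * colOneNorm Δ * η)
    (hA1 : colOneNorm (Ahat - A) ≤ εA) (hA2 : εA ≤ colOneNorm A) :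
    ∀ i j,
      |((2 * Real.pi) • (Ahatᵀ * Δhat * Ahat)) i j -
          ((2 * Real.pi) • (Aᵀ * Δ * A)) i j| ≤
        4 * Real.pi * colOneNorm A *
          (3 * specNormR Δ * εA + 16 * colOneNorm A * colOneNorm Δ * η) :=
  stmt14_general p η εA A Ahat Δ Δhat hΔd hA1 hA2
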